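/- For every positive integer r, the set T of all separations (A,B) of the grid W_r of order less than r such that B contains a cross is a tangle of order r: (T1) for every separation (A,B) of order < r, exactly one of (A,B), (B,A) is in T; (T2) for any (A₁,B₁),(A₂,B₂),(A₃,B₃) ∈ T, A₁∪A₂∪A₃ ≠ V(W_r). -/

import Mathlib

/-!
A row or a column that avoids the separator `A ∩ B` is a path, so it lies entirely in `A ∖ B` or
in `B ∖ A`. Fewer than `r` cells miss some row and some column, and the cross they span lies on
one side; crosses on both sides would make every column meet the separator, which needs `r` cells.

For (T2) we induct on `r`. If the small side of one separation misses both outer columns, the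
other two small sides cover both ends of every row, and each row then contains two of their
separator cells, `2r` in total, too many. Otherwise every separator meets an outer column, and at
most one separator misses the top row (else that row would lie in the third small side). Hence
the top row and a suitable outer column meet all three separators, and deleting them leaves three
separations of the `(r-1)`-grid of smaller order, still with a cross on the big side, whose small
sides would cover it.
-/

/-- The `r`-grid. -/
def gridGraph (r : ℕ) : SimpleGraph (Fin r × Fin r) where
  Adj v w := Nat.dist v.1.val w.1.val + Nat.dist v.2.val w.2.val = 1
  symm := by
    constructor
    intro v w h
    simpa [Nat.dist_comm] using h
  loopless := by
    constructor
    intro v h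
    simp [Nat.dist_self] at h

/-- `(A,B)` is a separation of `G`. -/
def IsSeparation {V : Type*} [Fintype V] [DecidableEq V]
    (G : SimpleGraph V) (A B : Finset V) : Prop :=
  A ∪ B = Finset.univ ∧
    ∀ a ∈ A, a ∉ B → ∀ b ∈ B, b ∉ A → ¬ G.Adj a b

/-- `B` contains all vertices of some cross. -/
def ContainsCross {r : ℕ} (B : Finset (Fin r × Fin r)) : Prop :=
  ∃ i j : Fin r, ∀ v : Fin r × Fin r, v.1 = i ∨ v.2 = j → v ∈ B

/-- The natural tangle: separations of order `< r` whose big side contains a cross. -/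
def NaturalTangle (r : ℕ) (A B : Finset (Fin r × Fin r)) : Prop :=
  IsSeparation (gridGraph r) A B ∧ (A ∩ B).card < r ∧ ContainsCross B

open Finset

lemma Fin.iff_of_forall_iff_succ {n : ℕ} {P : Fin n → Prop}
    (h : ∀ (x : Fin n) (hx : x.val + 1 < n), P x ↔ P ⟨x.val + 1, hx⟩) (a b : Fin n) :
    P a ↔ P b := by
  suffices key : ∀ (k : ℕ) (hk : k < n), P ⟨k, hk⟩ ↔ P ⟨0, by omega⟩ from
    (key a a.2).trans (key b b.2).symm
  intro k
  induction k with
  | zero => exact fun _ => Iff.rfl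
  | succ k ih => exact fun hk => (h ⟨k, by omega⟩ hk).symm.trans (ih _)

lemma Fin.exists_dist_eq_one {n : ℕ} (hn : 2 ≤ n) (i : Fin n) :
    ∃ j : Fin n, Nat.dist i j = 1 := by
  by_cases hi : i.val + 1 < n
  · exact ⟨⟨i + 1, hi⟩, by simp [Nat.dist]⟩
  · exact ⟨⟨i - 1, by omega⟩, by simp only [Nat.dist]; omega⟩

section Separation

variable {V : Type*} [Fintype V] [DecidableEq V] {G : SimpleGraph V} {A B : Finset V}

namespace IsSeparation

lemma symm (hs : IsSeparation G A B) : IsSeparation G B A :=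
  ⟨union_comm B A ▸ hs.1, fun b hb hbA a ha haB hadj => hs.2 a ha haB b hb hbA hadj.symm⟩

lemma mem_or_mem (hs : IsSeparation G A B) (v : V) : v ∈ A ∨ v ∈ B :=
  mem_union.1 (hs.1 ▸ mem_univ v)

lemma mem_of_adj (hs : IsSeparation G A B) {u w : V} (hu : u ∈ A) (huB : u ∉ B)
    (hadj : G.Adj u w) : w ∈ A := by
  by_contra hw
  exact hs.2 u hu huB w ((hs.mem_or_mem w).resolve_left hw) hw hadj

lemma mem_inter_of_adj (hs : IsSeparation G A B) {u w : V} (hu : u ∈ A) (hw : w ∉ A)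
    (hadj : G.Adj u w) : u ∈ A ∩ B :=
  mem_inter.2 ⟨hu, of_not_not fun huB => hw (hs.mem_of_adj hu huB hadj)⟩

lemma mem_iff_of_adj (hs : IsSeparation G A B) {u w : V} (hu : u ∉ A ∩ B) (hw : w ∉ A ∩ B)
    (hadj : G.Adj u w) : u ∈ A ↔ w ∈ A :=
  ⟨fun h => by_contra fun h' => hu (hs.mem_inter_of_adj h h' hadj),
    fun h => by_contra fun h' => hw (hs.mem_inter_of_adj h h' hadj.symm)⟩

lemma comap {W : Type*} [Fintype W] [DecidableEq W] {H : SimpleGraph W} (φ : H ↪g G)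
    (hs : IsSeparation G A B) :
    IsSeparation H (A.preimage φ φ.injective.injOn) (B.preimage φ φ.injective.injOn) := by
  refine ⟨eq_univ_iff_forall.2 fun v => ?_, fun a ha haB b hb hbA hadj => ?_⟩
  · simpa only [mem_union, mem_preimage] using hs.mem_or_mem (φ v)
  · rw [mem_preimage] at ha haB hb hbA
    exact hs.2 _ ha haB _ hb hbA (φ.map_adj_iff.2 hadj)

end IsSeparation

end Separation

lemma Finset.card_preimage_lt {V W : Type*} {φ : W → V} (hφ : Function.Injective φ)
    {S : Finset V} (hS : ∃ v ∈ S, v ∉ Set.range φ) : #(S.preimage φ hφ.injOn) < #S := by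
  classical
  rw [card_preimage]
  exact card_lt_card (filter_ssubset.2 hS)

section Grid

variable {r : ℕ}

lemma gridGraph_adj_of_dist_fst {i i' : Fin r} (h : Nat.dist i i' = 1) (y : Fin r) :
    (gridGraph r).Adj (i, y) (i', y) := by
  simp [gridGraph, h, Nat.dist_self]

lemma gridGraph_adj_of_dist_snd (x : Fin r) {j j' : Fin r} (h : Nat.dist j j' = 1) :
    (gridGraph r).Adj (x, j) (x, j') := by
  simp [gridGraph, h, Nat.dist_self]

def gridEmbedding {m n : ℕ} (f g : Fin m → Fin n)
    (hf : ∀ a b, Nat.dist (f a) (f b) = Nat.dist a b)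
    (hg : ∀ a b, Nat.dist (g a) (g b) = Nat.dist a b) : gridGraph m ↪g gridGraph n where
  toFun := Prod.map f g
  inj' := by
    have inj : ∀ {h : Fin m → Fin n}, (∀ a b, Nat.dist (h a) (h b) = Nat.dist a b) →
        Function.Injective h := fun hh a b hab =>
      Fin.ext (Nat.eq_of_dist_eq_zero ((hh a b).symm.trans (hab ▸ Nat.dist_self _)))
    exact (inj hf).prodMap (inj hg)
  map_rel_iff' {v w} := by
    change Nat.dist (f v.1) (f w.1) + Nat.dist (g v.2) (g w.2) = 1 ↔ _
    rw [hf, hg]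
    rfl

def MeetsRow (S : Finset (Fin r × Fin r)) (i : Fin r) : Prop := ∃ y, (i, y) ∈ S

def MeetsCol (S : Finset (Fin r × Fin r)) (j : Fin r) : Prop := ∃ x, (x, j) ∈ S

lemma le_card_of_forall_meetsRow {S : Finset (Fin r × Fin r)} (h : ∀ i, MeetsRow S i) :
    r ≤ #S :=
  calc r = #(univ : Finset (Fin r)) := by simp
    _ ≤ #(S.image Prod.fst) := card_le_card fun i _ =>
      let ⟨y, hy⟩ := h i; mem_image.2 ⟨_, hy, rfl⟩
    _ ≤ #S := card_image_le

lemma le_card_of_forall_meetsCol {S : Finset (Fin r × Fin r)} (h : ∀ j, MeetsCol S j) :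
    r ≤ #S :=
  calc r = #(univ : Finset (Fin r)) := by simp
    _ ≤ #(S.image Prod.snd) := card_le_card fun j _ =>
      let ⟨x, hx⟩ := h j; mem_image.2 ⟨_, hx, rfl⟩
    _ ≤ #S := card_image_le

lemma exists_not_meetsRow {S : Finset (Fin r × Fin r)} (h : #S < r) : ∃ i, ¬ MeetsRow S i := by
  by_contra! hS
  exact (le_card_of_forall_meetsRow hS).not_gt h

lemma exists_not_meetsCol {S : Finset (Fin r × Fin r)} (h : #S < r) : ∃ j, ¬ MeetsCol S j := by
  by_contra! hS
  exact (le_card_of_forall_meetsCol hS).not_gt h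

namespace IsSeparation

variable {A B : Finset (Fin r × Fin r)}

lemma mem_row_iff (hs : IsSeparation (gridGraph r) A B) {i : Fin r}
    (hi : ¬ MeetsRow (A ∩ B) i) (y y' : Fin r) : (i, y) ∈ A ↔ (i, y') ∈ A :=
  Fin.iff_of_forall_iff_succ (P := fun y => (i, y) ∈ A) (fun _ _ =>
    hs.mem_iff_of_adj (fun h => hi ⟨_, h⟩) (fun h => hi ⟨_, h⟩)
      (gridGraph_adj_of_dist_snd i (by simp [Nat.dist]))) y y'

lemma mem_col_iff (hs : IsSeparation (gridGraph r) A B) {j : Fin r}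
    (hj : ¬ MeetsCol (A ∩ B) j) (x x' : Fin r) : (x, j) ∈ A ↔ (x', j) ∈ A :=
  Fin.iff_of_forall_iff_succ (P := fun x => (x, j) ∈ A) (fun _ _ =>
    hs.mem_iff_of_adj (fun h => hj ⟨_, h⟩) (fun h => hj ⟨_, h⟩)
      (gridGraph_adj_of_dist_fst (by simp [Nat.dist]) j)) x x'

lemma meetsRow_of_mem (hs : IsSeparation (gridGraph r) A B) {i y y' : Fin r}
    (hA : (i, y) ∈ A) (hB : (i, y') ∈ B) : MeetsRow (A ∩ B) i :=
  by_contra fun hi => hi ⟨y', mem_inter.2 ⟨(hs.mem_row_iff hi y y').1 hA, hB⟩⟩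

lemma meetsCol_of_mem (hs : IsSeparation (gridGraph r) A B) {j x x' : Fin r}
    (hA : (x, j) ∈ A) (hB : (x', j) ∈ B) : MeetsCol (A ∩ B) j :=
  by_contra fun hj => hj ⟨x', mem_inter.2 ⟨(hs.mem_col_iff hj x x').1 hA, hB⟩⟩

lemma le_card_inter (hs : IsSeparation (gridGraph r) A B) {i i' : Fin r}
    (hA : ∀ y, (i, y) ∈ A) (hB : ∀ y, (i', y) ∈ B) : r ≤ #(A ∩ B) :=
  le_card_of_forall_meetsCol fun j => hs.meetsCol_of_mem (hA j) (hB j)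

lemma containsCross_of_mem (hs : IsSeparation (gridGraph r) A B) {i j : Fin r}
    (hi : ¬ MeetsRow (A ∩ B) i) (hj : ¬ MeetsCol (A ∩ B) j) (h : (i, j) ∈ A) :
    ContainsCross A := by
  refine ⟨i, j, ?_⟩
  rintro ⟨x, y⟩ (rfl | rfl)
  exacts [(hs.mem_row_iff hi j y).1 h, (hs.mem_col_iff hj _ x).1 h]

lemma containsCross_or (hs : IsSeparation (gridGraph r) A B) (h : #(A ∩ B) < r) :
    ContainsCross A ∨ ContainsCross B := by
  obtain ⟨i, hi⟩ := exists_not_meetsRow h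
  obtain ⟨j, hj⟩ := exists_not_meetsCol h
  rcases hs.mem_or_mem (i, j) with hij | hij
  · exact .inl (hs.containsCross_of_mem hi hj hij)
  · rw [inter_comm] at hi hj
    exact .inr (hs.symm.containsCross_of_mem hi hj hij)

lemma not_containsCross_and (hs : IsSeparation (gridGraph r) A B) (h : #(A ∩ B) < r) :
    ¬ (ContainsCross A ∧ ContainsCross B) := fun ⟨⟨_, _, hA⟩, ⟨_, _, hB⟩⟩ =>
  (hs.le_card_inter (fun _ => hA _ (.inl rfl)) (fun _ => hB _ (.inl rfl))).not_gt h

end IsSeparation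

theorem naturalTangle_xor {A B : Finset (Fin r × Fin r)} (hs : IsSeparation (gridGraph r) A B)
    (h : #(A ∩ B) < r) : Xor' (NaturalTangle r A B) (NaturalTangle r B A) := by
  rcases hs.containsCross_or h with hA | hB
  · exact .inr ⟨⟨hs.symm, inter_comm A B ▸ h, hA⟩,
      fun hT => hs.not_containsCross_and h ⟨hA, hT.2.2⟩⟩
  · exact .inl ⟨⟨hs, h, hB⟩, fun hT => hs.not_containsCross_and h ⟨hT.2.2, hB⟩⟩

end Grid

namespace NaturalTangle

variable {r : ℕ} {A B : Finset (Fin r × Fin r)}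

lemma meetsRow_of_mem (hT : NaturalTangle r A B) {i y : Fin r} (h : (i, y) ∈ A) :
    MeetsRow (A ∩ B) i :=
  let ⟨_, j, hB⟩ := hT.2.2
  hT.1.meetsRow_of_mem h (hB (i, j) (.inr rfl))

lemma meetsCol_of_mem (hT : NaturalTangle r A B) {j x : Fin r} (h : (x, j) ∈ A) :
    MeetsCol (A ∩ B) j :=
  let ⟨i, _, hB⟩ := hT.2.2
  hT.1.meetsCol_of_mem h (hB (i, j) (.inl rfl))

lemma exists_not_mem_row (hT : NaturalTangle r A B) (i : Fin r) : ∃ y, (i, y) ∉ A := by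
  by_contra! h
  obtain ⟨_, _, hB⟩ := hT.2.2
  exact (hT.1.le_card_inter h fun _ => hB _ (.inl rfl)).not_gt hT.2.1

/-- A row free of the separator lies in `B ∖ A`, which forces a neighbouring row into `B`. -/
lemma exists_row_subset_ne (hT : NaturalTangle r A B) (hr : 2 ≤ r) (i₀ : Fin r) :
    ∃ i ≠ i₀, ∀ y, (i, y) ∈ B := by
  obtain ⟨f, hf⟩ := exists_not_meetsRow hT.2.1
  have hfA : ∀ y, (f, y) ∉ A := fun y h => hf (hT.meetsRow_of_mem h)
  have hfB : ∀ y, (f, y) ∈ B := fun y => (hT.1.mem_or_mem _).resolve_left (hfA y)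
  by_cases hf₀ : f = i₀
  · obtain ⟨i, hi⟩ := Fin.exists_dist_eq_one hr f
    refine ⟨i, ?_, fun y =>
      hT.1.symm.mem_of_adj (hfB y) (hfA y) (gridGraph_adj_of_dist_fst hi y)⟩
    rintro rfl
    simp [← hf₀, Nat.dist_self] at hi
  · exact ⟨f, hf₀, hfB⟩

lemma exists_col_subset_ne (hT : NaturalTangle r A B) (hr : 2 ≤ r) (j₀ : Fin r) :
    ∃ j ≠ j₀, ∀ x, (x, j) ∈ B := by
  obtain ⟨f, hf⟩ := exists_not_meetsCol hT.2.1
  have hfA : ∀ x, (x, f) ∉ A := fun x h => hf (hT.meetsCol_of_mem h)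
  have hfB : ∀ x, (x, f) ∈ B := fun x => (hT.1.mem_or_mem _).resolve_left (hfA x)
  by_cases hf₀ : f = j₀
  · obtain ⟨j, hj⟩ := Fin.exists_dist_eq_one hr f
    refine ⟨j, ?_, fun x =>
      hT.1.symm.mem_of_adj (hfB x) (hfA x) (gridGraph_adj_of_dist_snd x hj)⟩
    rintro rfl
    simp [← hf₀, Nat.dist_self] at hj
  · exact ⟨f, hf₀, hfB⟩

section Succ

variable {A B : Finset (Fin (r + 1) × Fin (r + 1))}

/-- The two separator cells are the one just before the first cell of the row outside `A` and the
one just after the last. -/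
lemma two_le_card_filter_row (hT : NaturalTangle (r + 1) A B) {i : Fin (r + 1)}
    (h₀ : (i, 0) ∈ A) (hlast : (i, Fin.last r) ∈ A) : 2 ≤ #((A ∩ B).filter (·.1 = i)) := by
  set N := univ.filter fun y => (i, y) ∉ A with hN
  have hne : N.Nonempty :=
    let ⟨z, hz⟩ := hT.exists_not_mem_row i
    ⟨z, mem_filter.2 ⟨mem_univ z, hz⟩⟩
  have mem_N : ∀ {y}, y ∈ N ↔ (i, y) ∉ A := by simp [hN]
  obtain ⟨p, hp⟩ : ∃ p : Fin r, p.succ = N.min' hne :=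
    Fin.exists_succ_eq.2 fun h => mem_N.1 (h ▸ N.min'_mem hne) h₀
  obtain ⟨q, hq⟩ : ∃ q : Fin r, q.castSucc = N.max' hne :=
    Fin.exists_castSucc_eq.2 fun h => mem_N.1 (h ▸ N.max'_mem hne) hlast
  have hp_in : (i, p.castSucc) ∈ A :=
    not_not.1 fun h => (N.min'_le _ (mem_N.2 h)).not_gt (hp ▸ Fin.castSucc_lt_succ)
  have hq_in : (i, q.succ) ∈ A :=
    not_not.1 fun h => (N.le_max' _ (mem_N.2 h)).not_gt (hq ▸ Fin.castSucc_lt_succ)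
  have hpS : (i, p.castSucc) ∈ A ∩ B := hT.1.mem_inter_of_adj hp_in
    (mem_N.1 (hp ▸ N.min'_mem hne)) (gridGraph_adj_of_dist_snd i (by simp [Nat.dist]))
  have hqS : (i, q.succ) ∈ A ∩ B := hT.1.mem_inter_of_adj hq_in
    (mem_N.1 (hq ▸ N.max'_mem hne)) (gridGraph_adj_of_dist_snd i (by simp [Nat.dist]))
  have hpq : p.castSucc < q.succ :=
    calc p.castSucc < p.succ := Fin.castSucc_lt_succ
      _ ≤ q.castSucc := hp ▸ hq ▸ N.min'_le_max' hne
      _ < q.succ := Fin.castSucc_lt_succ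
  exact one_lt_card.2 ⟨_, mem_filter.2 ⟨hpS, rfl⟩, _, mem_filter.2 ⟨hqS, rfl⟩,
    fun h => hpq.ne (congrArg Prod.snd h)⟩

lemma comap_gridEmbedding {f g : Fin r → Fin (r + 1)}
    (hf : ∀ a b, Nat.dist (f a) (f b) = Nat.dist a b)
    (hg : ∀ a b, Nat.dist (g a) (g b) = Nat.dist a b) {ρ γ : Fin (r + 1)}
    (hfρ : ∀ i, (∃ a, f a = i) ↔ i ≠ ρ) (hgγ : ∀ j, (∃ b, g b = j) ↔ j ≠ γ)
    (hT : NaturalTangle (r + 1) A B) (hS : MeetsRow (A ∩ B) ρ ∨ MeetsCol (A ∩ B) γ) :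
    NaturalTangle r
      (A.preimage (gridEmbedding f g hf hg) (gridEmbedding f g hf hg).injective.injOn)
      (B.preimage (gridEmbedding f g hf hg) (gridEmbedding f g hf hg).injective.injOn) := by
  set φ := gridEmbedding f g hf hg
  obtain ⟨v, hvS, hvφ⟩ : ∃ v ∈ A ∩ B, v ∉ Set.range φ := by
    rcases hS with ⟨y, hy⟩ | ⟨x, hx⟩
    · exact ⟨_, hy, fun ⟨w, hw⟩ => (hfρ ρ).1 ⟨w.1, congrArg Prod.fst hw⟩ rfl⟩
    · exact ⟨_, hx, fun ⟨w, hw⟩ => (hgγ γ).1 ⟨w.2, congrArg Prod.snd hw⟩ rfl⟩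
  have hr : 2 ≤ r + 1 := by
    have := card_pos.2 ⟨v, hvS⟩
    have := hT.2.1
    omega
  obtain ⟨i, hiρ, hi⟩ := hT.exists_row_subset_ne hr ρ
  obtain ⟨j, hjγ, hj⟩ := hT.exists_col_subset_ne hr γ
  obtain ⟨a, rfl⟩ := (hfρ i).2 hiρ
  obtain ⟨b, rfl⟩ := (hgγ j).2 hjγ
  refine ⟨hT.1.comap φ, ?_, a, b, ?_⟩
  · rw [← preimage_inter]
    have := card_preimage_lt φ.injective ⟨v, hvS, hvφ⟩
    have := hT.2.1
    omega
  · rintro ⟨x, y⟩ (rfl | rfl)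
    exacts [mem_preimage.2 (hi _), mem_preimage.2 (hj _)]

end Succ

end NaturalTangle

section Cover

variable {r : ℕ} {A₁ B₁ A₂ B₂ A₃ B₃ : Finset (Fin (r + 1) × Fin (r + 1))}

lemma two_mul_le_card_add_card (h₁ : NaturalTangle (r + 1) A₁ B₁)
    (h₂ : NaturalTangle (r + 1) A₂ B₂)
    (hends : ∀ i j, (j = 0 ∨ j = Fin.last r) → (i, j) ∈ A₁ ∨ (i, j) ∈ A₂) :
    2 * (r + 1) ≤ #(A₁ ∩ B₁) + #(A₂ ∩ B₂) := by
  have hrow : ∀ i,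
      2 ≤ #((A₁ ∩ B₁).filter (·.1 = i)) + #((A₂ ∩ B₂).filter (·.1 = i)) := by
    intro i
    by_cases hm₁ : MeetsRow (A₁ ∩ B₁) i
    · by_cases hm₂ : MeetsRow (A₂ ∩ B₂) i
      · obtain ⟨⟨y₁, hy₁⟩, ⟨y₂, hy₂⟩⟩ := And.intro hm₁ hm₂
        have : 0 < #((A₁ ∩ B₁).filter (·.1 = i)) := card_pos.2 ⟨_, mem_filter.2 ⟨hy₁, rfl⟩⟩
        have : 0 < #((A₂ ∩ B₂).filter (·.1 = i)) := card_pos.2 ⟨_, mem_filter.2 ⟨hy₂, rfl⟩⟩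
        omega
      · have hA₁ : ∀ j, (j = 0 ∨ j = Fin.last r) → (i, j) ∈ A₁ := fun j hj =>
          (hends i j hj).resolve_right fun h => hm₂ (h₂.meetsRow_of_mem h)
        have := h₁.two_le_card_filter_row (hA₁ 0 (.inl rfl)) (hA₁ _ (.inr rfl))
        omega
    · have hA₂ : ∀ j, (j = 0 ∨ j = Fin.last r) → (i, j) ∈ A₂ := fun j hj =>
        (hends i j hj).resolve_left fun h => hm₁ (h₁.meetsRow_of_mem h)
      have := h₂.two_le_card_filter_row (hA₂ 0 (.inl rfl)) (hA₂ _ (.inr rfl))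
      omega
  calc 2 * (r + 1) = ∑ _i : Fin (r + 1), 2 := by simp [mul_comm]
    _ ≤ ∑ i, (#((A₁ ∩ B₁).filter (·.1 = i)) + #((A₂ ∩ B₂).filter (·.1 = i))) :=
      sum_le_sum fun i _ => hrow i
    _ = #(A₁ ∩ B₁) + #(A₂ ∩ B₂) := by
      rw [sum_add_distrib, card_eq_sum_card_fiberwise (fun v _ => mem_univ v.1),
        card_eq_sum_card_fiberwise (t := univ) (fun v _ => mem_univ v.1)]

lemma exists_meetsCol_zero_or_last (h₁ : NaturalTangle (r + 1) A₁ B₁)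
    (h₂ : NaturalTangle (r + 1) A₂ B₂) (h₃ : NaturalTangle (r + 1) A₃ B₃)
    (hcov : A₁ ∪ A₂ ∪ A₃ = univ) :
    ∃ γ, (γ = 0 ∨ γ = Fin.last r) ∧ MeetsCol (A₃ ∩ B₃) γ := by
  by_contra! h
  refine (two_mul_le_card_add_card h₁ h₂ fun i j hj => ?_).not_gt
    (by have := h₁.2.1; have := h₂.2.1; omega)
  rcases mem_union.1 (hcov ▸ mem_univ (i, j)) with h₁₂ | hA₃
  · exact mem_union.1 h₁₂
  · exact absurd (h₃.meetsCol_of_mem hA₃) (h j hj)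

lemma meetsRow_or_meetsRow (h₁ : NaturalTangle (r + 1) A₁ B₁)
    (h₂ : NaturalTangle (r + 1) A₂ B₂) (h₃ : NaturalTangle (r + 1) A₃ B₃)
    (hcov : A₁ ∪ A₂ ∪ A₃ = univ) (i : Fin (r + 1)) :
    MeetsRow (A₁ ∩ B₁) i ∨ MeetsRow (A₂ ∩ B₂) i := by
  by_contra! ⟨hm₁, hm₂⟩
  obtain ⟨y, hy⟩ := h₃.exists_not_mem_row i
  rcases mem_union.1 (hcov ▸ mem_univ (i, y)) with h₁₂ | h
  · rcases mem_union.1 h₁₂ with h | h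
    exacts [hm₁ (h₁.meetsRow_of_mem h), hm₂ (h₂.meetsRow_of_mem h)]
  · exact hy h

lemma union_ne_univ_of_meetsRow_zero_or_meetsCol
    (IH : ∀ {A₁ B₁ A₂ B₂ A₃ B₃ : Finset (Fin r × Fin r)}, NaturalTangle r A₁ B₁ →
      NaturalTangle r A₂ B₂ → NaturalTangle r A₃ B₃ → A₁ ∪ A₂ ∪ A₃ ≠ univ)
    (h₁ : NaturalTangle (r + 1) A₁ B₁) (h₂ : NaturalTangle (r + 1) A₂ B₂)
    (h₃ : NaturalTangle (r + 1) A₃ B₃) {γ : Fin (r + 1)} (hγ : γ = 0 ∨ γ = Fin.last r)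
    (hS₁ : MeetsRow (A₁ ∩ B₁) 0 ∨ MeetsCol (A₁ ∩ B₁) γ)
    (hS₂ : MeetsRow (A₂ ∩ B₂) 0 ∨ MeetsCol (A₂ ∩ B₂) γ)
    (hS₃ : MeetsRow (A₃ ∩ B₃) 0 ∨ MeetsCol (A₃ ∩ B₃) γ) : A₁ ∪ A₂ ∪ A₃ ≠ univ := by
  obtain ⟨g, hg, hgγ⟩ : ∃ g : Fin r → Fin (r + 1),
      (∀ a b, Nat.dist (g a) (g b) = Nat.dist a b) ∧ ∀ j, (∃ b, g b = j) ↔ j ≠ γ := by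
    rcases hγ with rfl | rfl
    exacts [⟨Fin.succ, fun _ _ => Nat.dist_succ_succ, fun _ => Fin.exists_succ_eq⟩,
      ⟨Fin.castSucc, fun _ _ => rfl, fun _ => Fin.exists_castSucc_eq⟩]
  have hsucc : ∀ a b : Fin r, Nat.dist a.succ b.succ = Nat.dist a b :=
    fun _ _ => Nat.dist_succ_succ
  have comap := fun {A B : Finset _} (hT : NaturalTangle (r + 1) A B) =>
    hT.comap_gridEmbedding hsucc hg (fun _ => Fin.exists_succ_eq) hgγ
  intro hcov
  refine IH (comap h₁ hS₁) (comap h₂ hS₂) (comap h₃ hS₃) (eq_univ_iff_forall.2 fun v => ?_)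
  have := hcov ▸ mem_univ (gridEmbedding Fin.succ g hsucc hg v)
  simpa only [mem_union, mem_preimage] using this

lemma union_ne_univ_succ
    (IH : ∀ {A₁ B₁ A₂ B₂ A₃ B₃ : Finset (Fin r × Fin r)}, NaturalTangle r A₁ B₁ →
      NaturalTangle r A₂ B₂ → NaturalTangle r A₃ B₃ → A₁ ∪ A₂ ∪ A₃ ≠ univ)
    (h₁ : NaturalTangle (r + 1) A₁ B₁) (h₂ : NaturalTangle (r + 1) A₂ B₂)
    (h₃ : NaturalTangle (r + 1) A₃ B₃) : A₁ ∪ A₂ ∪ A₃ ≠ univ := by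
  intro hcov
  have hcov₂ : A₂ ∪ A₃ ∪ A₁ = univ := by rw [← hcov]; ac_rfl
  have hcov₃ : A₃ ∪ A₁ ∪ A₂ = univ := by rw [← hcov]; ac_rfl
  obtain ⟨γ₁, hγ₁, hc₁⟩ := exists_meetsCol_zero_or_last h₂ h₃ h₁ hcov₂
  obtain ⟨γ₂, hγ₂, hc₂⟩ := exists_meetsCol_zero_or_last h₃ h₁ h₂ hcov₃
  obtain ⟨γ₃, hγ₃, hc₃⟩ := exists_meetsCol_zero_or_last h₁ h₂ h₃ hcov
  have descend := fun {γ} hγ hS₁ hS₂ hS₃ =>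
    union_ne_univ_of_meetsRow_zero_or_meetsCol IH h₁ h₂ h₃ (γ := γ) hγ hS₁ hS₂ hS₃ hcov
  by_cases hR₁ : MeetsRow (A₁ ∩ B₁) 0
  · by_cases hR₂ : MeetsRow (A₂ ∩ B₂) 0
    · exact descend hγ₃ (.inl hR₁) (.inl hR₂) (.inr hc₃)
    · have hR₃ := (meetsRow_or_meetsRow h₂ h₃ h₁ hcov₂ 0).resolve_left hR₂
      exact descend hγ₂ (.inl hR₁) (.inr hc₂) (.inl hR₃)
  · have hR₂ := (meetsRow_or_meetsRow h₁ h₂ h₃ hcov 0).resolve_left hR₁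
    have hR₃ := (meetsRow_or_meetsRow h₃ h₁ h₂ hcov₃ 0).resolve_right hR₁
    exact descend hγ₁ (.inr hc₁) (.inl hR₂) (.inl hR₃)

end Cover

theorem naturalTangle_union_ne_univ :
    ∀ (r : ℕ) {A₁ B₁ A₂ B₂ A₃ B₃ : Finset (Fin r × Fin r)}, NaturalTangle r A₁ B₁ →
      NaturalTangle r A₂ B₂ → NaturalTangle r A₃ B₃ → A₁ ∪ A₂ ∪ A₃ ≠ univ
  | 0, _, _, _, _, _, _, h₁, _, _ => absurd h₁.2.1 (Nat.not_lt_zero _)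
  | r + 1, _, _, _, _, _, _, h₁, h₂, h₃ =>
    union_ne_univ_succ (naturalTangle_union_ne_univ r) h₁ h₂ h₃

theorem naturalTangle_isTangle_general (r : ℕ) :
    (∀ A B : Finset (Fin r × Fin r), IsSeparation (gridGraph r) A B →
      (A ∩ B).card < r → Xor' (NaturalTangle r A B) (NaturalTangle r B A)) ∧
    (∀ A₁ B₁ A₂ B₂ A₃ B₃ : Finset (Fin r × Fin r),
      NaturalTangle r A₁ B₁ → NaturalTangle r A₂ B₂ → NaturalTangle r A₃ B₃ →
      A₁ ∪ A₂ ∪ A₃ ≠ Finset.univ) :=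
  ⟨fun _ _ => naturalTangle_xor, fun _ _ _ _ _ _ => naturalTangle_union_ne_univ r⟩

/-- The set of separations `(A,B)` of the `r`-grid of order `< r` with a cross
contained in `B` is a tangle of order `r`:
(T1) every separation of order `< r` has exactly one orientation in the tangle;
(T2) no three small sides cover the vertex set. -/
theorem naturalTangle_isTangle (r : ℕ) (hr : 0 < r) :
    (∀ A B : Finset (Fin r × Fin r), IsSeparation (gridGraph r) A B →
      (A ∩ B).card < r → Xor' (NaturalTangle r A B) (NaturalTangle r B A)) ∧
    (∀ A₁ B₁ A₂ B₂ A₃ B₃ : Finset (Fin r × Fin r),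
      NaturalTangle r A₁ B₁ → NaturalTangle r A₂ B₂ → NaturalTangle r A₃ B₃ →
      A₁ ∪ A₂ ∪ A₃ ≠ Finset.univ) :=
  naturalTangle_isTangle_general r
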